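/- arXiv:2112.12165 — 3 statements merged into one kernel-verified Lean document; each statement's English description precedes it below -/
import Mathlib

section
/- Every merge tree with n leaf nodes (n ≥ 1) admits a presentation with n generators and n−1 relations. -/
open scoped ENNReal NNReal

/-- A persistent set: a functor `ℝ → Set`, with `ℝ` regarded as a poset category. -/
structure PersistentSet where
  obj : ℝ → Type
  map : ∀ {s t : ℝ}, s ≤ t → obj s → obj t
  map_id : ∀ (t : ℝ) (x : obj t), map (le_refl t) x = x
  map_comp : ∀ {s t u : ℝ} (h1 : s ≤ t) (h2 : t ≤ u) (x : obj s),
    map h2 (map h1 x) = map (le_trans h1 h2) x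

/-- An `ε`-interleaving between persistent sets `M` and `N`. -/
def Interleaved (M N : PersistentSet) (ε : ℝ) : Prop :=
  ∃ (hε : 0 ≤ ε) (φ : ∀ t, M.obj t → N.obj (t + ε)) (ψ : ∀ t, N.obj t → M.obj (t + ε)),
    (∀ (s t : ℝ) (h : s ≤ t) (x : M.obj s),
      φ t (M.map h x) = N.map (by linarith : s + ε ≤ t + ε) (φ s x)) ∧
    (∀ (s t : ℝ) (h : s ≤ t) (x : N.obj s),
      ψ t (N.map h x) = M.map (by linarith : s + ε ≤ t + ε) (ψ s x)) ∧
    (∀ (s : ℝ) (x : M.obj s), ψ (s + ε) (φ s x) = M.map (by linarith : s ≤ s + ε + ε) x) ∧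
    (∀ (s : ℝ) (x : N.obj s), φ (s + ε) (ψ s x) = N.map (by linarith : s ≤ s + ε + ε) x)

/-- A persistent set is constructible if it has a finite set of critical values:
it is empty before the first critical value, and the internal maps are
isomorphisms between consecutive critical values. -/
def Constructible (M : PersistentSet) : Prop :=
  ∃ τ : Finset ℝ,
    (∀ t : ℝ, (∀ s ∈ τ, t < s) → IsEmpty (M.obj t)) ∧
    (∀ (s t : ℝ) (h : s ≤ t), (∀ c ∈ τ, c ≤ s ∨ t < c) → Function.Bijective (M.map h))

/-- A merge tree: a constructible persistent set with finite values which is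
eventually a singleton. -/
structure MergeTree where
  toPS : PersistentSet
  constructible : Constructible toPS
  finite : ∀ t, Finite (toPS.obj t)
  eventually_one : ∃ T : ℝ, ∀ t, T ≤ t → (Nonempty (toPS.obj t) ∧ Subsingleton (toPS.obj t))

/-- Combinatorial data of a presentation: `k` generator strands with birth times `γ`,
`l` relation strands with birth times `ρ`, and for each relation two merge maps
`f j`, `g j` into the generators (a map of strands `R_j → G_i` exists iff
`γ i ≤ ρ j`, which is the content of `hf`, `hg`). -/
structure Pres (k l : ℕ) where
  γ : Fin k → ℝ
  ρ : Fin l → ℝ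
  f : Fin l → Fin k
  g : Fin l → Fin k
  hf : ∀ j, γ (f j) ≤ ρ j
  hg : ∀ j, γ (g j) ≤ ρ j

/-- The relation at time `t` identifying the two targets of each relation strand
born by time `t`. -/
def Pres.rel {k l : ℕ} (P : Pres k l) (t : ℝ) :
    {i : Fin k // P.γ i ≤ t} → {i : Fin k // P.γ i ≤ t} → Prop :=
  fun a b => ∃ j : Fin l, P.ρ j ≤ t ∧
    ((P.f j = a.1 ∧ P.g j = b.1) ∨ (P.f j = b.1 ∧ P.g j = a.1))

/-- The persistent set presented by `P`: the pointwise coequalizer of the pair of maps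
`⊔ⱼ Rⱼ ⇉ ⊔ᵢ Gᵢ` of disjoint unions of strands. -/
def Pres.toPS {k l : ℕ} (P : Pres k l) : PersistentSet where
  obj t := Quot (P.rel t)
  map := fun {s t} h =>
    Quot.lift (fun a => Quot.mk (P.rel t) ⟨a.1, le_trans a.2 h⟩)
      (fun a b hab => Quot.sound (by
        obtain ⟨j, hj, hc⟩ := hab
        exact ⟨j, le_trans hj h, hc⟩))
  map_id := fun t x => Quot.inductionOn x fun a => rfl
  map_comp := fun h1 h2 x => Quot.inductionOn x fun a => rfl

/-- An isomorphism of persistent sets: a natural family of bijections. -/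
structure PSIso (M N : PersistentSet) where
  hom : ∀ t, M.obj t → N.obj t
  natural : ∀ {s t : ℝ} (h : s ≤ t) (x : M.obj s), hom t (M.map h x) = N.map h (hom s x)
  bij : ∀ t, Function.Bijective (hom t)

/-- `P` is a presentation of the persistent set `M`. -/
def IsPresentation {k l : ℕ} (P : Pres k l) (M : PersistentSet) : Prop :=
  Nonempty (PSIso P.toPS M)

/-- Two presentations are compatible if their underlying 0-1 presentation matrices agree:
entry `(i,j)` is 1 iff one of the two merge maps of relation `j` lands in generator `i`. -/
def Compatible {k l : ℕ} (P Q : Pres k l) : Prop :=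
  ∀ (i : Fin k) (j : Fin l), (P.f j = i ∨ P.g j = i) ↔ (Q.f j = i ∨ Q.g j = i)

/-- The `ℓp`-norm of a finite vector of reals, `p ∈ [1,∞]`. -/
noncomputable def lpNorm (p : ℝ≥0∞) {n : ℕ} (x : Fin n → ℝ) : ℝ :=
  if p = ⊤ then ⨆ i, |x i| else (∑ i, |x i| ^ p.toReal) ^ (1 / p.toReal)

/-- The difference of the label vectors of two compatible presentations: the vector of
differences of generator birth times followed by differences of relation birth times. -/
noncomputable def labelDiff {k l : ℕ} (P Q : Pres k l) : Fin (k + l) → ℝ :=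
  Fin.append (fun i => P.γ i - Q.γ i) (fun j => P.ρ j - Q.ρ j)

/-- The `p`-presentation semi-distance between merge trees. -/
noncomputable def dHat (p : ℝ≥0∞) (M N : MergeTree) : ℝ :=
  sInf {c | ∃ (k l : ℕ) (P Q : Pres k l), Compatible P Q ∧
    IsPresentation P M.toPS ∧ IsPresentation Q N.toPS ∧
    c = lpNorm p (labelDiff P Q)}

/-- The `p`-presentation distance: the path pseudometric induced by `dHat`. -/
noncomputable def dPres (p : ℝ≥0∞) (M N : MergeTree) : ℝ :=
  sInf {c | ∃ (n : ℕ) (Z : Fin (n + 1) → MergeTree), Z 0 = M ∧ Z (Fin.last n) = N ∧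
    c = ∑ i : Fin n, dHat p (Z i.castSucc) (Z i.succ)}

/-!
Sort the relations by birth time and keep a relation only if its two endpoints are not already
identified by the earlier ones. A discarded relation follows from earlier relations, which are
born no later than it, so the presented persistent set does not change. A kept relation merges
two classes, and the larger of their two least elements stops being the least element of its
class, never to become one again; as `0` always is one, this injects the kept relations into
the `k - 1` nonzero generators. Trivial relations then pad the count up to exactly `k - 1`.
-/

open Relation

theorem Relation.eqvGen_subtype_iff {α : Type*} {r : α → α → Prop} {p : α → Prop}
    (hr : ∀ a b, r a b → p a ∧ p b) {a b : Subtype p} :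
    EqvGen (fun x y : Subtype p => r x y) a b ↔ EqvGen r a b := by
  refine ⟨fun h => ?_, fun h => ?_⟩
  · induction h with
    | rel x y hxy => exact .rel _ _ hxy
    | refl => exact .refl _
    | symm _ _ _ ih => exact .symm _ _ ih
    | trans _ _ _ _ _ ih₁ ih₂ => exact .trans _ _ _ ih₁ ih₂
  · suffices H : ∀ x y, EqvGen r x y →
        x = y ∨ ∃ (hx : p x) (hy : p y), EqvGen (fun x y : Subtype p => r x y) ⟨x, hx⟩ ⟨y, hy⟩ by
      rcases H a b h with hab | ⟨_, _, hab⟩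
      · exact Subtype.ext hab ▸ .refl _
      · exact hab
    intro x y h
    induction h with
    | rel x y hxy => exact .inr ⟨(hr x y hxy).1, (hr x y hxy).2, .rel _ _ hxy⟩
    | refl => exact .inl rfl
    | symm _ _ _ ih =>
      rcases ih with rfl | ⟨hx, hy, ih⟩
      exacts [.inl rfl, .inr ⟨hy, hx, .symm _ _ ih⟩]
    | trans _ _ _ _ _ ih₁ ih₂ =>
      rcases ih₁ with rfl | ⟨hx, hy, ih₁⟩
      · exact ih₂
      rcases ih₂ with rfl | ⟨_, hz, ih₂⟩
      exacts [.inr ⟨hx, hy, ih₁⟩, .inr ⟨hx, hz, .trans _ _ _ ih₁ ih₂⟩]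

namespace PSIso

variable {A B C : PersistentSet}

def trans (i : PSIso A B) (j : PSIso B C) : PSIso A C where
  hom t x := j.hom t (i.hom t x)
  natural h x := by rw [i.natural, j.natural]
  bij t := (j.bij t).comp (i.bij t)

end PSIso

namespace Pres

section Strands

variable {k l : ℕ} (f g : Fin l → Fin k)

def Joins (j : Fin l) (a b : Fin k) : Prop := (f j = a ∧ g j = b) ∨ (f j = b ∧ g j = a)

abbrev stage (m : ℕ) : Fin k → Fin k → Prop :=
  EqvGen fun a b => ∃ j : Fin l, (j : ℕ) < m ∧ Joins f g j a b

def IsEffective (j : Fin l) : Prop := ¬ stage f g j (f j) (g j)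

open Classical in
noncomputable def classMin (m : ℕ) (a : Fin k) : Fin k :=
  (Finset.univ.filter (stage f g m a)).min' ⟨a, Finset.mem_filter.mpr ⟨Finset.mem_univ _, .refl a⟩⟩

def IsClassMin (m : ℕ) (a : Fin k) : Prop := classMin f g m a = a

noncomputable def absorbed (j : Fin l) : Fin k := max (classMin f g j (f j)) (classMin f g j (g j))

variable {f g}

theorem Joins.eqvGen {r : Fin k → Fin k → Prop} {j : Fin l} {a b : Fin k} (hj : Joins f g j a b)
    (h : EqvGen r (f j) (g j)) : EqvGen r a b := by
  rcases hj with ⟨rfl, rfl⟩ | ⟨rfl, rfl⟩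
  exacts [h, .symm _ _ h]

theorem stage_mono {m m' : ℕ} (h : m ≤ m') : stage f g m ≤ stage f g m' :=
  EqvGen.eqvGen_mono fun _ _ ⟨j, hj, hJ⟩ => ⟨j, hj.trans_le h, hJ⟩

theorem stage_succ (j : Fin l) : stage f g (j + 1) (f j) (g j) :=
  .rel _ _ ⟨j, Nat.lt_succ_self _, .inl ⟨rfl, rfl⟩⟩

theorem stage_classMin (m : ℕ) (a : Fin k) : stage f g m a (classMin f g m a) := by
  classical
  exact (Finset.mem_filter.mp (Finset.min'_mem _ _)).2

theorem classMin_le {m : ℕ} {a b : Fin k} (h : stage f g m a b) : classMin f g m a ≤ b := by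
  classical
  exact Finset.min'_le _ _ (by simpa using h)

theorem classMin_eq {m : ℕ} {a b : Fin k} (h : stage f g m a b) :
    classMin f g m a = classMin f g m b :=
  le_antisymm (classMin_le (.trans _ _ _ h (stage_classMin m b)))
    (classMin_le (.trans _ _ _ (.symm _ _ h) (stage_classMin m a)))

theorem isClassMin_classMin (m : ℕ) (a : Fin k) : IsClassMin f g m (classMin f g m a) :=
  (classMin_eq (stage_classMin m a)).symm

theorem IsClassMin.of_le {m m' : ℕ} {a : Fin k} (h : m ≤ m') (ha : IsClassMin f g m' a) :
    IsClassMin f g m a :=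
  le_antisymm (classMin_le (.refl a)) <|
    ha.symm.le.trans (classMin_le (stage_mono h _ _ (stage_classMin m a)))

theorem isClassMin_zero [NeZero k] (m : ℕ) : IsClassMin f g m 0 :=
  le_antisymm (classMin_le (.refl 0)) (Fin.zero_le _)

theorem isClassMin_absorbed (j : Fin l) : IsClassMin f g j (absorbed f g j) := by
  rcases max_choice (classMin f g j (f j)) (classMin f g j (g j)) with h | h <;>
    rw [absorbed, h] <;> exact isClassMin_classMin _ _

theorem not_isClassMin_absorbed {j : Fin l} (hj : IsEffective f g j) :
    ¬ IsClassMin f g (j + 1) (absorbed f g j) := by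
  set a := classMin f g j (f j)
  set b := classMin f g j (g j)
  have hab : a ≠ b := fun h => by
    have hb : stage f g j b (g j) := .symm _ _ (stage_classMin _ _)
    rw [← h] at hb
    exact hj (.trans _ _ _ (stage_classMin _ _) hb)
  have hmerged : stage f g (j + 1) a b :=
    .trans _ _ _ (.symm _ _ (stage_mono (Nat.le_succ _) _ _ (stage_classMin _ _)))
      (.trans _ _ _ (stage_succ j) (stage_mono (Nat.le_succ _) _ _ (stage_classMin _ _)))
  have hlt : min a b < max a b := min_lt_max.mpr hab
  have hle : classMin f g (j + 1) (max a b) ≤ min a b := by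
    rcases le_total a b with h | h
    · simpa [h] using classMin_le (.symm _ _ hmerged)
    · simpa [h] using classMin_le hmerged
  exact fun hmin => (hle.trans_lt hlt).ne hmin

theorem absorbed_injOn : Set.InjOn (absorbed f g) {j | IsEffective f g j} := by
  have key : ∀ {i j : Fin l}, IsEffective f g i → i < j → absorbed f g i ≠ absorbed f g j :=
    fun hi hij h => not_isClassMin_absorbed hi <| h ▸ (isClassMin_absorbed _).of_le hij
  intro i hi j hj h
  rcases lt_trichotomy i j with hij | rfl | hji
  exacts [absurd h (key hi hij), rfl, absurd h.symm (key hj hji)]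

open Classical in
theorem card_effective_le [NeZero k] : (Finset.univ.filter (IsEffective f g)).card ≤ k - 1 := by
  have hmaps : Set.MapsTo (absorbed f g) (Finset.univ.filter (IsEffective f g))
      (Finset.univ.erase (0 : Fin k)) := fun j hj =>
    Finset.mem_erase.mpr ⟨fun h0 => not_isClassMin_absorbed (Finset.mem_filter.mp hj).2
      (by rw [h0]; exact isClassMin_zero _), Finset.mem_univ _⟩
  simpa using Finset.card_le_card_of_injOn _ hmaps (by simpa using absorbed_injOn)

theorem eqvGen_effective_of_isLowerSet {D : Set (Fin l)} (hD : IsLowerSet D) {j : Fin l}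
    (hj : j ∈ D) :
    EqvGen (fun a b => ∃ i ∈ D, IsEffective f g i ∧ Joins f g i a b) (f j) (g j) := by
  induction j using WellFoundedLT.induction with
  | _ j ih =>
  by_cases hje : IsEffective f g j
  · exact .rel _ _ ⟨j, hj, hje, .inl ⟨rfl, rfl⟩⟩
  · refine EqvGen.eqvGen_le (fun a b ⟨i, hij, hJ⟩ => ?_) _ _ (not_not.mp hje)
    exact hJ.eqvGen (ih i hij (hD (le_of_lt hij) hj))

end Strands

variable {k l l' : ℕ}

/-- `Pres.rel` with the generators taken in `Fin k` rather than among those already born. -/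
def link (P : Pres k l) (t : ℝ) (a b : Fin k) : Prop := ∃ j, P.ρ j ≤ t ∧ Joins P.f P.g j a b

theorem γ_le_of_link {P : Pres k l} {t : ℝ} {a b : Fin k} (h : P.link t a b) :
    P.γ a ≤ t ∧ P.γ b ≤ t := by
  obtain ⟨j, hj, ⟨rfl, rfl⟩ | ⟨rfl, rfl⟩⟩ := h
  exacts [⟨(P.hf j).trans hj, (P.hg j).trans hj⟩, ⟨(P.hg j).trans hj, (P.hf j).trans hj⟩]

theorem eqvGen_rel_iff {P : Pres k l} {t : ℝ} {a b : {i // P.γ i ≤ t}} :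
    EqvGen (P.rel t) a b ↔ EqvGen (P.link t) a b :=
  eqvGen_subtype_iff (r := P.link t) (p := (P.γ · ≤ t)) fun _ _ => γ_le_of_link

def homOfLink (P : Pres k l) (Q : Pres k l') (hγ : P.γ = Q.γ)
    (h : ∀ t a b, P.link t a b → EqvGen (Q.link t) a b) (t : ℝ) : P.toPS.obj t → Q.toPS.obj t :=
  Quot.lift (fun a => Quot.mk _ ⟨a.1, hγ ▸ a.2⟩) fun _ _ hab =>
    Quot.eqvGen_sound (eqvGen_rel_iff.mpr (h t _ _ hab))

theorem nonempty_psIso_of_link {P : Pres k l} {Q : Pres k l'} (hγ : P.γ = Q.γ)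
    (hPQ : ∀ t a b, P.link t a b → EqvGen (Q.link t) a b)
    (hQP : ∀ t a b, Q.link t a b → EqvGen (P.link t) a b) :
    Nonempty (PSIso P.toPS Q.toPS) :=
  ⟨{ hom := homOfLink P Q hγ hPQ
     natural := fun _ x => Quot.inductionOn x fun _ => rfl
     bij := fun _ => Function.bijective_iff_has_inverse.mpr
       ⟨homOfLink Q P hγ.symm hQP _, fun x => Quot.inductionOn x fun _ => rfl,
         fun x => Quot.inductionOn x fun _ => rfl⟩ }⟩

def reindex (P : Pres k l) (e : Fin l' → Fin l) : Pres k l' where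
  γ := P.γ
  ρ := P.ρ ∘ e
  f := P.f ∘ e
  g := P.g ∘ e
  hf j := P.hf (e j)
  hg j := P.hg (e j)

theorem link_reindex_iff {P : Pres k l} {e : Fin l' → Fin l} {t : ℝ} {a b : Fin k} :
    (P.reindex e).link t a b ↔ ∃ j ∈ Set.range e, P.ρ j ≤ t ∧ Joins P.f P.g j a b :=
  ⟨fun ⟨i, h⟩ => ⟨e i, ⟨i, rfl⟩, h⟩, fun ⟨_, ⟨i, rfl⟩, h⟩ => ⟨i, h⟩⟩

theorem link_of_link_reindex {P : Pres k l} {e : Fin l' → Fin l} {t : ℝ} {a b : Fin k}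
    (h : (P.reindex e).link t a b) : P.link t a b :=
  (link_reindex_iff.mp h).imp fun _ h => h.2

theorem nonempty_psIso_reindex_of_surjective (P : Pres k l) {e : Fin l' → Fin l}
    (he : Function.Surjective e) : Nonempty (PSIso (P.reindex e).toPS P.toPS) :=
  nonempty_psIso_of_link rfl (fun _ _ _ h => .rel _ _ (link_of_link_reindex h))
    fun _ _ _ ⟨j, hj⟩ => .rel _ _ (link_reindex_iff.mpr ⟨j, he.range_eq ▸ Set.mem_univ j, hj⟩)

theorem nonempty_psIso_reindex_of_effective_subset (P : Pres k l) (hρ : Monotone P.ρ)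
    {e : Fin l' → Fin l} (he : {j | IsEffective P.f P.g j} ⊆ Set.range e) :
    Nonempty (PSIso (P.reindex e).toPS P.toPS) := by
  refine nonempty_psIso_of_link rfl (fun _ _ _ h => .rel _ _ (link_of_link_reindex h)) ?_
  rintro t a b ⟨j, hj, hJ⟩
  refine hJ.eqvGen (EqvGen.eqvGen_mono ?_ _ _
    (eqvGen_effective_of_isLowerSet ((isLowerSet_Iic t).preimage hρ) hj))
  exact fun a b ⟨i, hi, hie, hJi⟩ => link_reindex_iff.mpr ⟨i, he hie, hi, hJi⟩

def pad (P : Pres k l) (i₀ : Fin k) (d : ℕ) : Pres k (l + d) where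
  γ := P.γ
  ρ := Fin.append P.ρ fun _ => P.γ i₀
  f := Fin.append P.f fun _ => i₀
  g := Fin.append P.g fun _ => i₀
  hf := Fin.addCases (by simpa using P.hf) (by simp)
  hg := Fin.addCases (by simpa using P.hg) (by simp)

theorem nonempty_psIso_pad (P : Pres k l) (i₀ : Fin k) (d : ℕ) :
    Nonempty (PSIso (P.pad i₀ d).toPS P.toPS) := by
  refine nonempty_psIso_of_link rfl ?_ fun _ _ _ ⟨j, hj, hJ⟩ =>
    .rel _ _ ⟨Fin.castAdd d j, by simpa [pad] using hj, by simpa [pad, Joins] using hJ⟩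
  rintro t a b ⟨j, hj, hJ⟩
  induction j using Fin.addCases with
  | left j => exact .rel _ _ ⟨j, by simpa [pad] using hj, by simpa [pad, Joins] using hJ⟩
  | right j =>
    obtain ⟨rfl, rfl⟩ | ⟨rfl, rfl⟩ : (i₀ = a ∧ i₀ = b) ∨ (i₀ = b ∧ i₀ = a) := by
      simpa [pad, Joins] using hJ
    all_goals exact .refl _

theorem exists_pres_sub_one_psIso [NeZero k] (P : Pres k l) :
    ∃ Q : Pres k (k - 1), Nonempty (PSIso Q.toPS P.toPS) := by
  classical
  let P' := P.reindex (Tuple.sort P.ρ)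
  let S := Finset.univ.filter (IsEffective P'.f P'.g)
  obtain ⟨d, hd⟩ := Nat.exists_eq_add_of_le (card_effective_le (f := P'.f) (g := P'.g))
  rw [hd]
  obtain ⟨iPad⟩ := (P'.reindex (S.orderEmbOfFin rfl)).nonempty_psIso_pad 0 d
  obtain ⟨iEff⟩ := P'.nonempty_psIso_reindex_of_effective_subset (Tuple.monotone_sort P.ρ)
    (e := S.orderEmbOfFin rfl) (by simp [S])
  obtain ⟨iSort⟩ := P.nonempty_psIso_reindex_of_surjective (Tuple.sort P.ρ).surjective
  exact ⟨_, ⟨(iPad.trans iEff).trans iSort⟩⟩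

end Pres

/-- every merge tree with `n ≥ 1` leaf nodes (i.e. whose minimal number of
generators over all presentations is `n`) admits a presentation with `n` generators and
`n - 1` relations. -/
theorem presentation_with_n_minus_one_relations (M : MergeTree) (n : ℕ) (hn : 1 ≤ n)
    (hleaves : IsLeast {k : ℕ | ∃ l : ℕ, ∃ P : Pres k l, IsPresentation P M.toPS} n) :
    ∃ P : Pres n (n - 1), IsPresentation P M.toPS := by
  obtain ⟨⟨l, P, ⟨iP⟩⟩, -⟩ := hleaves
  have : NeZero n := ⟨by omega⟩
  obtain ⟨Q, ⟨iQ⟩⟩ := P.exists_pres_sub_one_psIso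
  exact ⟨Q, ⟨iQ.trans iP⟩⟩
end

section
/- Any two merge trees M and N admit compatible presentations, i.e., presentations P_M and P_N whose underlying 0-1 presentation matrices are identical. -/
open scoped ENNReal NNReal

/-! Every element of a merge tree comes from an element sitting at a critical value, so these
finitely many elements generate it. Taking one relation strand for each ordered pair of
generators, born at the first critical value where their images merge, gives a presentation
whose matrix only depends on the number of generators. Repeating generators pads both
presentations to a common size, and then the two matrices coincide. -/

open Function

lemma exists_surjective_fin_of_card_le {α : Type*} [Finite α] [Nonempty α] {n : ℕ}
    (hn : Nat.card α ≤ n) : ∃ e : Fin n → α, Surjective e :=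
  ⟨invFun (Fin.castLE hn ∘ Finite.equivFin α),
    invFun_surjective ((Fin.castLE_injective hn).comp (Finite.equivFin α).injective)⟩

lemma Quot.lift_bijective_of_ker {α β : Type*} {r : α → α → Prop} {φ : α → β}
    (hr : ∀ a b, r a b ↔ φ a = φ b) (hφ : Surjective φ) :
    Bijective (Quot.lift φ fun a b h => (hr a b).1 h) := by
  refine ⟨fun x y hxy => ?_, fun y => ?_⟩
  · induction x using Quot.ind
    induction y using Quot.ind
    exact Quot.sound ((hr _ _).2 hxy)
  · obtain ⟨a, rfl⟩ := hφ y
    exact ⟨Quot.mk r a, rfl⟩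

structure CriticalGrid (M : PersistentSet) where
  times : Finset ℝ
  top : ℝ
  top_mem : top ∈ times
  le_top : ∀ s ∈ times, s ≤ top
  nonempty_top : Nonempty (M.obj top)
  subsingleton_top : Subsingleton (M.obj top)
  isEmpty_of_lt : ∀ t, (∀ s ∈ times, t < s) → IsEmpty (M.obj t)
  bijective_map : ∀ {s t : ℝ} (h : s ≤ t), (∀ c ∈ times, c ≤ s ∨ t < c) → Bijective (M.map h)

namespace CriticalGrid

variable {M : PersistentSet} (G : CriticalGrid M)

abbrev Generator : Type := Σ c : G.times, M.obj c

def germ (x : G.Generator) {t : ℝ} (h : (x.1 : ℝ) ≤ t) : M.obj t := M.map h x.2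

lemma map_germ (x : G.Generator) {s t : ℝ} (hs : (x.1 : ℝ) ≤ s) (h : s ≤ t) :
    M.map h (G.germ x hs) = G.germ x (hs.trans h) :=
  M.map_comp hs h x.2

def MergedAt (x y : G.Generator) (t : ℝ) : Prop :=
  ∃ (hx : (x.1 : ℝ) ≤ t) (hy : (y.1 : ℝ) ≤ t), G.germ x hx = G.germ y hy

variable {G}

lemma MergedAt.symm {x y : G.Generator} {t : ℝ} (h : G.MergedAt x y t) : G.MergedAt y x t :=
  let ⟨hx, hy, heq⟩ := h
  ⟨hy, hx, heq.symm⟩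

lemma MergedAt.mono {x y : G.Generator} {s t : ℝ} (h : G.MergedAt x y s) (hst : s ≤ t) :
    G.MergedAt x y t :=
  let ⟨hx, hy, heq⟩ := h
  ⟨hx.trans hst, hy.trans hst, by rw [← G.map_germ x hx hst, ← G.map_germ y hy hst, heq]⟩

variable (G)

lemma mergedAt_top (x y : G.Generator) : G.MergedAt x y G.top :=
  ⟨G.le_top _ x.1.2, G.le_top _ y.1.2, G.subsingleton_top.elim _ _⟩

open Classical in
noncomputable def mergeTime (x y : G.Generator) : ℝ :=
  (G.times.filter (G.MergedAt x y)).min'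
    ⟨G.top, Finset.mem_filter.2 ⟨G.top_mem, G.mergedAt_top x y⟩⟩

lemma mergedAt_mergeTime (x y : G.Generator) : G.MergedAt x y (G.mergeTime x y) := by
  classical
  exact (Finset.mem_filter.1 (Finset.min'_mem _ _)).2

lemma le_mergeTime_left (x y : G.Generator) : (x.1 : ℝ) ≤ G.mergeTime x y :=
  (G.mergedAt_mergeTime x y).1

lemma le_mergeTime_right (x y : G.Generator) : (y.1 : ℝ) ≤ G.mergeTime x y :=
  (G.mergedAt_mergeTime x y).symm.1

lemma exists_floor {t : ℝ} (h : ∃ s ∈ G.times, s ≤ t) :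
    ∃ c ∈ G.times, ∃ hc : c ≤ t, (∀ s ∈ G.times, s ≤ t → s ≤ c) ∧ Bijective (M.map hc) := by
  have hne : (G.times.filter (· ≤ t)).Nonempty :=
    let ⟨s, hs, hst⟩ := h
    ⟨s, Finset.mem_filter.2 ⟨hs, hst⟩⟩
  set c := (G.times.filter (· ≤ t)).max' hne
  obtain ⟨hc, hct⟩ := Finset.mem_filter.1 (Finset.max'_mem _ hne)
  have hfloor : ∀ s ∈ G.times, s ≤ t → s ≤ c := fun s hs hst =>
    Finset.le_max' _ s (Finset.mem_filter.2 ⟨hs, hst⟩)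
  refine ⟨c, hc, hct, hfloor, G.bijective_map hct fun s hs => ?_⟩
  by_cases hst : s ≤ t
  exacts [Or.inl (hfloor s hs hst), Or.inr (not_le.1 hst)]

lemma mergeTime_le_iff {x y : G.Generator} {t : ℝ} :
    G.mergeTime x y ≤ t ↔ G.MergedAt x y t := by
  classical
  refine ⟨(G.mergedAt_mergeTime x y).mono, fun ⟨hx, hy, heq⟩ => ?_⟩
  obtain ⟨c, hc, hct, hfloor, hbij⟩ := G.exists_floor ⟨_, x.1.2, hx⟩
  have hmerged : G.MergedAt x y c :=
    ⟨hfloor _ x.1.2 hx, hfloor _ y.1.2 hy, hbij.1 (by rwa [G.map_germ, G.map_germ])⟩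
  exact (Finset.min'_le _ _ (Finset.mem_filter.2 ⟨hc, hmerged⟩)).trans hct

lemma exists_germ_eq {t : ℝ} (y : M.obj t) : ∃ (x : G.Generator) (h : (x.1 : ℝ) ≤ t),
    G.germ x h = y := by
  have h : ∃ s ∈ G.times, s ≤ t := by
    by_contra! h
    exact (G.isEmpty_of_lt t h).false y
  obtain ⟨c, hc, hct, -, hbij⟩ := G.exists_floor h
  obtain ⟨z, rfl⟩ := hbij.2 y
  exact ⟨⟨⟨c, hc⟩, z⟩, hct, rfl⟩

noncomputable def pairPres {n : ℕ} (e : Fin n → G.Generator) : Pres n (n * n) where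
  γ i := (e i).1
  ρ j := G.mergeTime (e (finProdFinEquiv.symm j).1) (e (finProdFinEquiv.symm j).2)
  f j := (finProdFinEquiv.symm j).1
  g j := (finProdFinEquiv.symm j).2
  hf _ := G.le_mergeTime_left _ _
  hg _ := G.le_mergeTime_right _ _

lemma pairPres_rel_iff {n : ℕ} (e : Fin n → G.Generator) {t : ℝ}
    (a b : {i : Fin n // (G.pairPres e).γ i ≤ t}) :
    (G.pairPres e).rel t a b ↔ G.germ (e a.1) a.2 = G.germ (e b.1) b.2 := by
  obtain ⟨a, ha⟩ := a
  obtain ⟨b, hb⟩ := b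
  constructor
  · rintro ⟨j, hj, ⟨rfl, rfl⟩ | ⟨rfl, rfl⟩⟩
    · exact (G.mergeTime_le_iff.1 hj).2.2
    · exact (G.mergeTime_le_iff.1 hj).2.2.symm
  · intro heq
    refine ⟨finProdFinEquiv (a, b), ?_, Or.inl ⟨?_, ?_⟩⟩
    · simpa only [pairPres, Equiv.symm_apply_apply] using G.mergeTime_le_iff.2 ⟨ha, hb, heq⟩
    all_goals simp only [pairPres, Equiv.symm_apply_apply]

lemma exists_germ_eq_of_surjective {n : ℕ} {e : Fin n → G.Generator} (he : Surjective e)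
    {t : ℝ} (y : M.obj t) :
    ∃ a : {i : Fin n // (G.pairPres e).γ i ≤ t}, G.germ (e a.1) a.2 = y := by
  obtain ⟨x, hx, rfl⟩ := G.exists_germ_eq y
  obtain ⟨i, rfl⟩ := he x
  exact ⟨⟨i, hx⟩, rfl⟩

lemma isPresentation_pairPres {n : ℕ} {e : Fin n → G.Generator} (he : Surjective e) :
    IsPresentation (G.pairPres e) M :=
  ⟨{ hom := fun _ => Quot.lift (fun a => G.germ (e a.1) a.2)
        fun a b h => (G.pairPres_rel_iff e a b).1 h
     natural := fun h x => Quot.inductionOn x fun a => (G.map_germ (e a.1) a.2 h).symm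
     bij := fun _ => Quot.lift_bijective_of_ker (G.pairPres_rel_iff e)
        (G.exists_germ_eq_of_surjective he) }⟩

end CriticalGrid

lemma MergeTree.nonempty_criticalGrid (M : MergeTree) : Nonempty (CriticalGrid M.toPS) := by
  obtain ⟨τ, hemp, hbij⟩ := M.constructible
  obtain ⟨T₀, hT₀⟩ := M.eventually_one
  obtain ⟨B, hB⟩ := τ.bddAbove
  have hsingle := hT₀ (max T₀ B) (le_max_left _ _)
  exact ⟨{
    times := insert (max T₀ B) τ
    top := max T₀ B
    top_mem := Finset.mem_insert_self _ _
    le_top := fun s hs => (Finset.mem_insert.1 hs).elim le_of_eq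
      fun hs => (hB hs).trans (le_max_right _ _)
    nonempty_top := hsingle.1
    subsingleton_top := hsingle.2
    isEmpty_of_lt := fun t ht => hemp t fun s hs => ht s (Finset.mem_insert_of_mem hs)
    bijective_map := fun h hc => hbij _ _ h fun c hc' => hc c (Finset.mem_insert_of_mem hc') }⟩

lemma MergeTree.exists_pairPres (M : MergeTree) : ∃ k, ∀ n, k ≤ n → ∃ P : Pres n (n * n),
    IsPresentation P M.toPS ∧ P.f = (fun j => (finProdFinEquiv.symm j).1) ∧
      P.g = (fun j => (finProdFinEquiv.symm j).2) := by
  obtain ⟨G⟩ := M.nonempty_criticalGrid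
  have := M.finite
  have : Nonempty G.Generator :=
    let ⟨y⟩ := G.nonempty_top
    ⟨⟨⟨G.top, G.top_mem⟩, y⟩⟩
  refine ⟨Nat.card G.Generator, fun n hn => ?_⟩
  obtain ⟨e, he⟩ := exists_surjective_fin_of_card_le hn
  exact ⟨G.pairPres e, G.isPresentation_pairPres he, rfl, rfl⟩

/-- any two merge trees admit compatible presentations, i.e. presentations
with identical underlying 0-1 presentation matrices. -/
theorem compatible_presentations_exist (M N : MergeTree) :
    ∃ (k l : ℕ) (P Q : Pres k l), Compatible P Q ∧
      IsPresentation P M.toPS ∧ IsPresentation Q N.toPS := by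
  obtain ⟨kM, hM⟩ := M.exists_pairPres
  obtain ⟨kN, hN⟩ := N.exists_pairPres
  obtain ⟨P, hP, hPf, hPg⟩ := hM (max kM kN) (le_max_left _ _)
  obtain ⟨Q, hQ, hQf, hQg⟩ := hN (max kM kN) (le_max_right _ _)
  refine ⟨_, _, P, Q, fun i j => ?_, hP, hQ⟩
  rw [hPf, hPg, hQf, hQg]
end

section
/- If two merge trees M and N admit compatible presentations P_M and P_N with ‖L(P_M) − L(P_N)‖_∞ = ε, then M and N are ε-interleaved. -/
open scoped ENNReal NNReal

/-!
Compatible presentations glue the same unordered pairs of generators, so they differ only in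
birth times. If every birth time moves by at most `ε`, sending each generator strand of `P` to
the same strand of `Q`, delayed by `ε`, respects the relations; the two delays compose to the
internal `2ε`-shift already on generators. The interleaving of the presented persistent sets
is then transported along the presentation isomorphisms to `M` and `N`.
-/

namespace PSIso

variable {M N : PersistentSet}

noncomputable def symm (e : PSIso M N) : PSIso N M where
  hom t := (Equiv.ofBijective _ (e.bij t)).symm
  natural h x := (e.bij _).1 <| by
    simp only [Equiv.ofBijective_apply_symm_apply, e.natural]
  bij t := (Equiv.ofBijective _ (e.bij t)).symm.bijective

@[simp]
theorem hom_symm_hom (e : PSIso M N) (t : ℝ) (x : N.obj t) : e.hom t (e.symm.hom t x) = x :=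
  Equiv.ofBijective_apply_symm_apply _ _ x

@[simp]
theorem symm_hom_hom (e : PSIso M N) (t : ℝ) (x : M.obj t) : e.symm.hom t (e.hom t x) = x :=
  Equiv.ofBijective_symm_apply_apply _ _ x

end PSIso

theorem Interleaved.of_iso {M M' N N' : PersistentSet} {ε : ℝ} (h : Interleaved M N ε)
    (eM : PSIso M M') (eN : PSIso N N') : Interleaved M' N' ε := by
  obtain ⟨hε, φ, ψ, hφ, hψ, hψφ, hφψ⟩ := h
  refine ⟨hε, fun t x => eN.hom _ (φ t (eM.symm.hom t x)),
    fun t x => eM.hom _ (ψ t (eN.symm.hom t x)), ?_, ?_, ?_, ?_⟩ <;> intros <;>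
    simp only [PSIso.natural, PSIso.symm_hom_hom, PSIso.hom_symm_hom, hφ, hψ, hψφ, hφψ]

theorem lpNorm_top_nonneg {n : ℕ} (x : Fin n → ℝ) : 0 ≤ lpNorm ⊤ x := by
  rw [lpNorm, if_pos rfl]
  exact Real.iSup_nonneg fun i => abs_nonneg _

theorem abs_le_lpNorm_top {n : ℕ} (x : Fin n → ℝ) (i : Fin n) : |x i| ≤ lpNorm ⊤ x := by
  rw [lpNorm, if_pos rfl]
  exact le_ciSup (f := fun i => |x i|) (Finite.bddAbove_range _) i

namespace Pres

variable {k l : ℕ}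

theorem rel_iff (P : Pres k l) {t : ℝ} {a b : {i : Fin k // P.γ i ≤ t}} :
    P.rel t a b ↔ ∃ j, P.ρ j ≤ t ∧ s(P.f j, P.g j) = s(a.1, b.1) := by
  simp only [Pres.rel, Sym2.eq_iff]

theorem abs_γ_sub_le_lpNorm (P Q : Pres k l) (i : Fin k) :
    |P.γ i - Q.γ i| ≤ lpNorm ⊤ (labelDiff P Q) := by
  simpa [labelDiff] using abs_le_lpNorm_top (labelDiff P Q) (Fin.castAdd l i)

theorem abs_ρ_sub_le_lpNorm (P Q : Pres k l) (j : Fin l) :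
    |P.ρ j - Q.ρ j| ≤ lpNorm ⊤ (labelDiff P Q) := by
  simpa [labelDiff] using abs_le_lpNorm_top (labelDiff P Q) (Fin.natAdd k j)

end Pres

namespace Compatible

variable {k l : ℕ} {P Q : Pres k l}

theorem symm (hc : Compatible P Q) : Compatible Q P := fun i j => (hc i j).symm

theorem sym2_eq (hc : Compatible P Q) (j : Fin l) : s(P.f j, P.g j) = s(Q.f j, Q.g j) :=
  Sym2.ext fun i => by simpa only [Sym2.mem_iff, eq_comm] using hc i j

variable (hc : Compatible P Q) {ε : ℝ} (hγ : ∀ i, Q.γ i ≤ P.γ i + ε)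
  (hρ : ∀ j, Q.ρ j ≤ P.ρ j + ε)

def shift (t : ℝ) : P.toPS.obj t → Q.toPS.obj (t + ε) :=
  Quot.lift (fun a => Quot.mk _ ⟨a.1, (hγ a.1).trans (by linarith [a.2])⟩) fun _ _ hab =>
    Quot.sound <| by
      obtain ⟨j, hj, hpair⟩ := P.rel_iff.mp hab
      exact Q.rel_iff.mpr ⟨j, (hρ j).trans (by linarith), (hc.sym2_eq j).symm.trans hpair⟩

theorem shift_map {s t : ℝ} (h : s ≤ t) (x : P.toPS.obj s) :
    hc.shift hγ hρ t (P.toPS.map h x) =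
      Q.toPS.map (by linarith : s + ε ≤ t + ε) (hc.shift hγ hρ s x) :=
  Quot.inductionOn x fun _ => rfl

theorem symm_shift_shift (hε : 0 ≤ ε) (hγ' : ∀ i, P.γ i ≤ Q.γ i + ε)
    (hρ' : ∀ j, P.ρ j ≤ Q.ρ j + ε) (t : ℝ) (x : P.toPS.obj t) :
    hc.symm.shift hγ' hρ' (t + ε) (hc.shift hγ hρ t x) =
      P.toPS.map (by linarith : t ≤ t + ε + ε) x :=
  Quot.inductionOn x fun _ => rfl

end Compatible

theorem Compatible.interleaved {k l : ℕ} {P Q : Pres k l} (hc : Compatible P Q) {ε : ℝ}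
    (hε : 0 ≤ ε) (hγ : ∀ i, |P.γ i - Q.γ i| ≤ ε) (hρ : ∀ j, |P.ρ j - Q.ρ j| ≤ ε) :
    Interleaved P.toPS Q.toPS ε := by
  have hγPQ : ∀ i, Q.γ i ≤ P.γ i + ε := fun i => by linarith [(abs_le.mp (hγ i)).1]
  have hρPQ : ∀ j, Q.ρ j ≤ P.ρ j + ε := fun j => by linarith [(abs_le.mp (hρ j)).1]
  have hγQP : ∀ i, P.γ i ≤ Q.γ i + ε := fun i => by linarith [(abs_le.mp (hγ i)).2]
  have hρQP : ∀ j, P.ρ j ≤ Q.ρ j + ε := fun j => by linarith [(abs_le.mp (hρ j)).2]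
  exact ⟨hε, hc.shift hγPQ hρPQ, hc.symm.shift hγQP hρQP,
    fun _ _ => hc.shift_map hγPQ hρPQ, fun _ _ => hc.symm.shift_map hγQP hρQP,
    hc.symm_shift_shift hγPQ hρPQ hε hγQP hρQP,
    hc.symm.symm_shift_shift hγQP hρQP hε hγPQ hρPQ⟩

/-- if merge trees `M`, `N` admit compatible presentations whose label
vectors are at `ℓ∞`-distance `ε`, then `M` and `N` are `ε`-interleaved. -/
theorem interleaved_of_compatible_presentations (M N : MergeTree) {k l : ℕ}
    (P Q : Pres k l) (ε : ℝ) (hc : Compatible P Q)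
    (hPM : IsPresentation P M.toPS) (hQN : IsPresentation Q N.toPS)
    (hε : lpNorm ⊤ (labelDiff P Q) = ε) :
    Interleaved M.toPS N.toPS ε := by
  subst hε
  exact (hc.interleaved (lpNorm_top_nonneg _) (P.abs_γ_sub_le_lpNorm Q)
    (P.abs_ρ_sub_le_lpNorm Q)).of_iso hPM.some hQN.some
end
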